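/- Let n ≥ 1 and let M₁, M₂, M₃ be positive semidefinite symmetric real n×n Toeplitz matrices. Then δ_T(M₁, M₃) ≤ δ_T(M₁, M₂) + δ_T(M₂, M₃), where δ_T(Mᵢ, Mₖ) := 2·min{(1/n)trace(M) : M positive semidefinite symmetric Toeplitz, M ≥ Mᵢ, M ≥ Mₖ} − (1/n)(trace(Mᵢ) + trace(Mₖ)). -/

import Mathlib

open Matrix

/-- A matrix is Toeplitz if its `(i,j)` entry depends only on `i - j`. -/
def IsToeplitz {n : ℕ} {α : Type*} (M : Matrix (Fin n) (Fin n) α) : Prop :=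
  ∀ i j i' j' : Fin n, (i : ℤ) - (j : ℤ) = (i' : ℤ) - (j' : ℤ) → M i j = M i' j'

/-- `τ_T(M₁, M₂)`: the minimal normalized trace over positive semidefinite
symmetric Toeplitz matrices dominating both `M₁` and `M₂` in the Loewner order. -/
noncomputable def tauT (n : ℕ) (M₁ M₂ : Matrix (Fin n) (Fin n) ℝ) : ℝ :=
  sInf {x : ℝ | ∃ M : Matrix (Fin n) (Fin n) ℝ,
    M.PosSemidef ∧ IsToeplitz M ∧ (M - M₁).PosSemidef ∧ (M - M₂).PosSemidef ∧
    x = (n : ℝ)⁻¹ * M.trace}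

/-- `δ_T(M₁, M₂) := 2τ_T(M₁, M₂) - (1/n)(trace M₁ + trace M₂)`. -/
noncomputable def deltaT (n : ℕ) (M₁ M₂ : Matrix (Fin n) (Fin n) ℝ) : ℝ :=
  2 * tauT n M₁ M₂ - (n : ℝ)⁻¹ * (M₁.trace + M₂.trace)

lemma IsToeplitz.add' {n : ℕ} {A B : Matrix (Fin n) (Fin n) ℝ}
    (hA : IsToeplitz A) (hB : IsToeplitz B) : IsToeplitz (A + B) := by
  intro i j i' j' h
  simp [Matrix.add_apply, hA i j i' j' h, hB i j i' j' h]

lemma IsToeplitz.sub' {n : ℕ} {A B : Matrix (Fin n) (Fin n) ℝ}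
    (hA : IsToeplitz A) (hB : IsToeplitz B) : IsToeplitz (A - B) := by
  intro i j i' j' h
  simp [Matrix.sub_apply, hA i j i' j' h, hB i j i' j' h]

lemma psd_trace_nonneg {n : ℕ} {M : Matrix (Fin n) (Fin n) ℝ}
    (hM : M.PosSemidef) : 0 ≤ M.trace := by
  rw [Matrix.trace]
  apply Finset.sum_nonneg
  intro i _
  exact hM.diag_nonneg

/-- Triangle inequality for `δ_T` on positive semidefinite symmetric Toeplitz
matrices. -/
theorem deltaT_triangle
    (n : ℕ) (hn : 1 ≤ n) (M₁ M₂ M₃ : Matrix (Fin n) (Fin n) ℝ)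
    (h₁ : M₁.PosSemidef) (hT₁ : IsToeplitz M₁)
    (h₂ : M₂.PosSemidef) (hT₂ : IsToeplitz M₂)
    (h₃ : M₃.PosSemidef) (hT₃ : IsToeplitz M₃) :
    deltaT n M₁ M₃ ≤ deltaT n M₁ M₂ + deltaT n M₂ M₃ := by
  set S := fun (A B : Matrix (Fin n) (Fin n) ℝ) => {x : ℝ | ∃ M : Matrix (Fin n) (Fin n) ℝ,
    M.PosSemidef ∧ IsToeplitz M ∧ (M - A).PosSemidef ∧ (M - B).PosSemidef ∧
    x = (n : ℝ)⁻¹ * M.trace} with hS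
  have hmem : ∀ (A B : Matrix (Fin n) (Fin n) ℝ), A.PosSemidef → IsToeplitz A →
      B.PosSemidef → IsToeplitz B → ((n : ℝ)⁻¹ * (A + B).trace) ∈ S A B := by
    intro A B hA hTA hB hTB
    exact ⟨A + B, hA.add hB, hTA.add' hTB,
      by simpa [add_sub_cancel_left] using hB,
      by simpa [add_sub_cancel_right] using hA, rfl⟩
  have hne₁₂ : (S M₁ M₂).Nonempty := ⟨_, hmem M₁ M₂ h₁ hT₁ h₂ hT₂⟩
  have hne₂₃ : (S M₂ M₃).Nonempty := ⟨_, hmem M₂ M₃ h₂ hT₂ h₃ hT₃⟩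
  have hbdd : BddBelow (S M₁ M₃) := by
    refine ⟨0, fun x hx => ?_⟩
    obtain ⟨M, hM, -, -, -, rfl⟩ := hx
    exact mul_nonneg (by positivity) (psd_trace_nonneg hM)
  have key : tauT n M₁ M₃ ≤ tauT n M₁ M₂ + tauT n M₂ M₃ - (n : ℝ)⁻¹ * M₂.trace := by
    rw [show tauT n M₁ M₂ = sInf (S M₁ M₂) from rfl, show tauT n M₂ M₃ = sInf (S M₂ M₃) from rfl]
    have h12 : ∀ x ∈ S M₁ M₂, tauT n M₁ M₃ + (n : ℝ)⁻¹ * M₂.trace - sInf (S M₂ M₃) ≤ x := by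
      intro x hx
      obtain ⟨N, hN, hNT, hN1, hN2, rfl⟩ := hx
      have h23 : ∀ y ∈ S M₂ M₃,
          tauT n M₁ M₃ + (n : ℝ)⁻¹ * M₂.trace - (n : ℝ)⁻¹ * N.trace ≤ y := by
        intro y hy
        obtain ⟨P, hP, hPT, hP2, hP3, rfl⟩ := hy
        have hmem13 : ((n : ℝ)⁻¹ * (N + P - M₂).trace) ∈ S M₁ M₃ := by
          refine ⟨N + P - M₂, ?_, (hNT.add' hPT).sub' hT₂, ?_, ?_, rfl⟩
          · have : N + P - M₂ = M₂ + ((N - M₂) + (P - M₂)) := by abel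
            rw [this]; exact h₂.add (hN2.add hP2)
          · have : N + P - M₂ - M₁ = (N - M₁) + (P - M₂) := by abel
            rw [this]; exact hN1.add hP2
          · have : N + P - M₂ - M₃ = (N - M₂) + (P - M₃) := by abel
            rw [this]; exact hN2.add hP3
        have h1 : tauT n M₁ M₃ ≤ (n : ℝ)⁻¹ * (N + P - M₂).trace := csInf_le hbdd hmem13
        rw [Matrix.trace_sub, Matrix.trace_add] at h1
        linarith [h1, mul_sub ((n:ℝ)⁻¹) (N.trace + P.trace) M₂.trace,
          mul_add ((n:ℝ)⁻¹) N.trace P.trace]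
      have := le_csInf hne₂₃ h23
      linarith
    have := le_csInf hne₁₂ h12
    linarith
  unfold deltaT
  have e1 : (n:ℝ)⁻¹*(M₁.trace+M₂.trace) = (n:ℝ)⁻¹*M₁.trace + (n:ℝ)⁻¹*M₂.trace := mul_add _ _ _
  have e2 : (n:ℝ)⁻¹*(M₂.trace+M₃.trace) = (n:ℝ)⁻¹*M₂.trace + (n:ℝ)⁻¹*M₃.trace := mul_add _ _ _
  have e3 : (n:ℝ)⁻¹*(M₁.trace+M₃.trace) = (n:ℝ)⁻¹*M₁.trace + (n:ℝ)⁻¹*M₃.trace := mul_add _ _ _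
  linarith
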